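/- arXiv:2511.04399 — 3 statements merged into one kernel-verified Lean document; each statement's English description precedes it below -/
import Mathlib

section
/- Let H be a finite-dimensional complex inner product space, let |s⟩ and |ψ⟩ be unit vectors in H, and set α = ⟨s|ψ⟩. Then |⟨s| U_{|ψ⟩} U_{|s⟩} |ψ⟩| = |α| · |3 − 4|α|²|. -/
open scoped ComplexInnerProductSpace

/-- The Grover reflection operator `U_{|x⟩} = I - 2|x⟩⟨x|` applied to a vector `v`. -/
noncomputable def groverRefl {H : Type*} [NormedAddCommGroup H] [InnerProductSpace ℂ H]
    (x v : H) : H :=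
  v - (2 * ⟪x, v⟫) • x

/-- For unit vectors `|s⟩, |ψ⟩` and `α = ⟨s|ψ⟩`, one has
`|⟨s| U_{|ψ⟩} U_{|s⟩} |ψ⟩| = |α| · |3 − 4|α|²|`. -/
theorem overlap_after_double_reflection
    {H : Type*} [NormedAddCommGroup H] [InnerProductSpace ℂ H] [FiniteDimensional ℂ H]
    (s ψ : H) (hs : ‖s‖ = 1) (hψ : ‖ψ‖ = 1) (α : ℂ) (hα : α = ⟪s, ψ⟫) :
    ‖⟪s, groverRefl ψ (groverRefl s ψ)⟫‖ = ‖α‖ * |3 - 4 * ‖α‖ ^ 2| := by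
  have hss : ⟪s, s⟫ = (1 : ℂ) := by
    rw [inner_self_eq_norm_sq_to_K, hs]; norm_num
  have hψψ : ⟪ψ, ψ⟫ = (1 : ℂ) := by
    rw [inner_self_eq_norm_sq_to_K, hψ]; norm_num
  have hψs : ⟪ψ, s⟫ = (starRingEnd ℂ) α := by
    rw [hα, inner_conj_symm]
  have hnorm : (starRingEnd ℂ) α * α = ((‖α‖ : ℂ)) ^ 2 := by
    have := Complex.mul_conj α
    rw [mul_comm] at this
    rw [this, Complex.normSq_eq_norm_sq]
    push_cast; ring
  have key : ⟪s, groverRefl ψ (groverRefl s ψ)⟫ = -α * (3 - 4 * (‖α‖ : ℂ) ^ 2) := by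
    simp only [groverRefl, inner_sub_right, inner_smul_right, inner_sub_left,
      inner_smul_left, hss, hψψ, hψs, ← hα]
    ring_nf
    rw [show α ^ 2 * (starRingEnd ℂ) α * 4 = ((starRingEnd ℂ) α * α) * α * 4 by ring, hnorm]
    ring
  rw [key, norm_mul, norm_neg]
  congr 1
  rw [show (3 : ℂ) - 4 * (‖α‖ : ℂ) ^ 2 = ((3 - 4 * ‖α‖ ^ 2 : ℝ) : ℂ) by push_cast; ring,
    Complex.norm_real, Real.norm_eq_abs]
end

section
/- Let H be a finite-dimensional complex inner product space and let |s⟩ and |ψ⟩ be unit vectors in H. Then |⟨s| U_{|ψ⟩} U_{|s⟩} |ψ⟩| = 1 if and only if |⟨s|ψ⟩| = 1/2 or |⟨s|ψ⟩| = 1. In particular, if |⟨s|ψ⟩| ≠ 1, the recoverability condition |⟨s| U_{|ψ⟩} U_{|s⟩} |ψ⟩| = 1 holds exactly when |⟨s|ψ⟩| = 1/2. -/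
open scoped ComplexInnerProductSpace

lemma grover_key_real (t : ℝ) (ht0 : 0 ≤ t) (ht1 : t ≤ 1) :
    t * |4 * t ^ 2 - 3| = 1 ↔ t = 1 / 2 ∨ t = 1 := by
  constructor
  · intro h
    rcases abs_cases (4 * t ^ 2 - 3) with ⟨he, _⟩ | ⟨he, _⟩
    · rw [he] at h
      right
      have h2 : (t - 1) * (2 * t + 1) ^ 2 = 0 := by nlinarith
      rcases mul_eq_zero.mp h2 with h3 | h3
      · linarith
      · nlinarith [sq_nonneg (2 * t + 1)]
    · rw [he] at h
      left
      have h2 : (t + 1) * (2 * t - 1) ^ 2 = 0 := by nlinarith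
      rcases mul_eq_zero.mp h2 with h3 | h3
      · linarith
      · nlinarith [sq_nonneg (2 * t - 1)]
  · rintro (rfl | rfl) <;> norm_num

/-- `|⟨s| U_{|ψ⟩} U_{|s⟩} |ψ⟩| = 1` iff `|⟨s|ψ⟩| = 1/2` or `|⟨s|ψ⟩| = 1`; in particular,
when `|⟨s|ψ⟩| ≠ 1` perfect recoverability holds exactly when `|⟨s|ψ⟩| = 1/2`. -/
theorem recoverability_iff_overlap_half
    {H : Type*} [NormedAddCommGroup H] [InnerProductSpace ℂ H] [FiniteDimensional ℂ H]
    (s ψ : H) (hs : ‖s‖ = 1) (hψ : ‖ψ‖ = 1) :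
    (‖⟪s, groverRefl ψ (groverRefl s ψ)⟫‖ = 1 ↔ ‖⟪s, ψ⟫‖ = 1 / 2 ∨ ‖⟪s, ψ⟫‖ = 1) ∧
    (‖⟪s, ψ⟫‖ ≠ 1 →
      (‖⟪s, groverRefl ψ (groverRefl s ψ)⟫‖ = 1 ↔ ‖⟪s, ψ⟫‖ = 1 / 2)) := by
  set a : ℂ := ⟪s, ψ⟫ with ha
  have hss : ⟪s, s⟫ = 1 := by
    rw [inner_self_eq_norm_sq_to_K, hs]; norm_num
  have hpp : ⟪ψ, ψ⟫ = 1 := by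
    rw [inner_self_eq_norm_sq_to_K, hψ]; norm_num
  have hps : ⟪ψ, s⟫ = starRingEnd ℂ a := by
    rw [ha, inner_conj_symm]
  have hconj : a * starRingEnd ℂ a = (‖a‖ : ℂ) ^ 2 := by
    rw [Complex.mul_conj]
    norm_cast
    rw [Complex.normSq_eq_norm_sq]
  have key : ⟪s, groverRefl ψ (groverRefl s ψ)⟫ = a * ((4 * ‖a‖ ^ 2 - 3 : ℝ) : ℂ) := by
    simp only [groverRefl, inner_sub_right, inner_smul_right, hss, hpp, hps, ← ha]
    push_cast
    linear_combination (4*a) * hconj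
  have hnorm : ‖⟪s, groverRefl ψ (groverRefl s ψ)⟫‖ = ‖a‖ * |4 * ‖a‖ ^ 2 - 3| := by
    rw [key, norm_mul, Complex.norm_real, Real.norm_eq_abs]
  have ht1 : ‖a‖ ≤ 1 := by
    have := norm_inner_le_norm (𝕜 := ℂ) s ψ
    rwa [hs, hψ, one_mul] at this
  have main := grover_key_real ‖a‖ (norm_nonneg a) ht1
  rw [hnorm]
  exact ⟨main, fun hne => main.trans ⟨fun h => h.resolve_right hne, Or.inl⟩⟩
end

section
/- Let H be a finite-dimensional complex inner product space, let |s⟩, |ψ_j⟩, |ψ_i⟩ be unit vectors in H, and suppose there is a complex number c with |c| = 1 such that U_{|ψ_j⟩} U_{|s⟩} |ψ_j⟩ = c |s⟩. Then |⟨s| U_{|ψ_j⟩} U_{|s⟩} |ψ_i⟩| = |⟨ψ_j|ψ_i⟩|. Hence the probability that an eavesdropper who guesses nonce |ψ_j⟩ and applies the recovery operator U_{|ψ_j⟩} to the shared state U_{|s⟩}|ψ_i⟩ observes the true secret |s⟩ equals |⟨ψ_j|ψ_i⟩|². -/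
open scoped ComplexInnerProductSpace

lemma groverRefl_inner {H : Type*} [NormedAddCommGroup H] [InnerProductSpace ℂ H]
    (x : H) (hx : ‖x‖ = 1) (u v : H) :
    ⟪groverRefl x u, groverRefl x v⟫ = ⟪u, v⟫ := by
  have hxx : ⟪x, x⟫ = (1 : ℂ) := by
    rw [inner_self_eq_norm_sq_to_K, hx]; norm_num
  have hux : ⟪u, x⟫ = starRingEnd ℂ ⟪x, u⟫ := (inner_conj_symm u x).symm
  simp only [groverRefl, inner_sub_left, inner_sub_right, inner_smul_left, inner_smul_right,
    hxx, hux, map_mul, map_ofNat]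
  ring

/-- If the guessed nonce `|ψ_j⟩` satisfies the recoverability identity
`U_{|ψ_j⟩} U_{|s⟩} |ψ_j⟩ = c |s⟩` for some unimodular phase `c`, then
`|⟨s| U_{|ψ_j⟩} U_{|s⟩} |ψ_i⟩| = |⟨ψ_j|ψ_i⟩|`; hence the probability that the
eavesdropper observes the true secret equals `|⟨ψ_j|ψ_i⟩|²`. -/
theorem eavesdropper_guess_overlap
    {H : Type*} [NormedAddCommGroup H] [InnerProductSpace ℂ H] [FiniteDimensional ℂ H]
    (s ψj ψi : H) (hs : ‖s‖ = 1) (hψj : ‖ψj‖ = 1) (hψi : ‖ψi‖ = 1)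
    (c : ℂ) (hc : ‖c‖ = 1)
    (hrec : groverRefl ψj (groverRefl s ψj) = c • s) :
    ‖⟪s, groverRefl ψj (groverRefl s ψi)⟫‖ = ‖⟪ψj, ψi⟫‖ ∧
    ‖⟪s, groverRefl ψj (groverRefl s ψi)⟫‖ ^ 2 = ‖⟪ψj, ψi⟫‖ ^ 2 := by
  have hc0 : c ≠ 0 := by intro h; rw [h] at hc; simp at hc
  have hA : ⟪groverRefl ψj (groverRefl s ψj), groverRefl ψj (groverRefl s ψi)⟫ = ⟪ψj, ψi⟫ := by
    rw [groverRefl_inner ψj hψj, groverRefl_inner s hs]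
  rw [hrec, inner_smul_left] at hA
  have key : ‖⟪s, groverRefl ψj (groverRefl s ψi)⟫‖ = ‖⟪ψj, ψi⟫‖ := by
    rw [← hA, norm_mul, RCLike.norm_conj, hc, one_mul]
  exact ⟨key, by rw [key]⟩
end
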